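/- For natural numbers n ≥ 1 and M ≥ 2 and real q ∈ (0,1], define Γ(n, M, q) = (1/q²)·[ (q + (1−q)/2^n)^M − ((1−q)/2^n)^M ]². Then: (i) Γ(n, M, q) ≤ 1 for all n ≥ 1, M ≥ 2, q ∈ (0,1]; (ii) Γ is monotonically decreasing in M, i.e. Γ(n, M+1, q) ≤ Γ(n, M, q) for all n ≥ 1, M ≥ 2, q ∈ (0,1]; and (iii) Γ(1, 2, q) = 1 for all q ∈ (0,1]. Consequently, under global depolarizing noise with survival parameter q = (1−p)^l, the relative resolvability of Virtual Distillation (protocol B, normalizing by the dominant eigenvalue) equals Γ(n, M, q) and is at most 1, with protocol A (normalizing by Tr[ρ̃^M]) having relative resolvability at most that of protocol B. -/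
import Mathlib


/-- The relative-resolvability function `Γ(n, M, q)` of Virtual Distillation with
`M` state copies on `n` qubits under global depolarizing noise with survival
parameter `q`. -/
noncomputable def vdGamma (n M : ℕ) (q : ℝ) : ℝ :=
  (1 / q ^ 2) * ((q + (1 - q) / 2 ^ n) ^ M - ((1 - q) / 2 ^ n) ^ M) ^ 2

/-- One-step decrease: `a^(k+2) - b^(k+2) ≤ a^(k+1) - b^(k+1)` when
`0 ≤ b ≤ a` and `a + b ≤ 1`. -/
lemma vd_step (a b : ℝ) (hb : 0 ≤ b) (hab : b ≤ a) (hs : a + b ≤ 1) (k : ℕ) :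
    a ^ (k + 2) - b ^ (k + 2) ≤ a ^ (k + 1) - b ^ (k + 1) := by
  have h1 : b ^ (k + 1) ≤ a ^ (k + 1) := pow_le_pow_left₀ hb hab _
  have h0 : b ^ k ≤ a ^ k := pow_le_pow_left₀ hb hab _
  have hkey : (a + b) * (a ^ (k + 1) - b ^ (k + 1)) - (a ^ (k + 2) - b ^ (k + 2))
      = a * b * (a ^ k - b ^ k) := by ring
  have hnn : 0 ≤ a * b * (a ^ k - b ^ k) :=
    mul_nonneg (mul_nonneg (hb.trans hab) hb) (by linarith)
  have hle : (a + b) * (a ^ (k + 1) - b ^ (k + 1)) ≤ a ^ (k + 1) - b ^ (k + 1) :=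
    mul_le_of_le_one_left (by linarith) hs
  linarith

lemma vd_aux (a b : ℝ) (hb : 0 ≤ b) (hab : b ≤ a) (hs : a + b ≤ 1) :
    ∀ M : ℕ, a ^ (M + 1) - b ^ (M + 1) ≤ a - b := by
  intro M
  induction M with
  | zero => simp
  | succ k ih =>
    have := vd_step a b hb hab hs k
    linarith

/-- **Proposition 3** (relative resolvability of Virtual Distillation with global
depolarizing noise). For all `n ≥ 1`, `M ≥ 2` and `q ∈ (0,1]`:
(i) `Γ(n, M, q) ≤ 1`; (ii) `Γ` is monotonically decreasing in `M`; and
(iii) `Γ(1, 2, q) = 1`. Hence the relative resolvability of Virtual Distillation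
(protocol B) equals `Γ(n, M, q) ≤ 1`, and protocol A is no better. -/
theorem virtual_distillation_global_depolarizing
    (n M : ℕ) (hn : 1 ≤ n) (hM : 2 ≤ M) (q : ℝ) (hq0 : 0 < q) (hq1 : q ≤ 1) :
    vdGamma n M q ≤ 1 ∧
    vdGamma n (M + 1) q ≤ vdGamma n M q ∧
    vdGamma 1 2 q = 1 := by
  set b : ℝ := (1 - q) / 2 ^ n with hbdef
  set a : ℝ := q + (1 - q) / 2 ^ n with hadef
  have hpow : (0:ℝ) < 2 ^ n := pow_pos two_pos n
  have hb : 0 ≤ b := div_nonneg (by linarith) hpow.le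
  have hab : b ≤ a := by simp [hadef, hbdef]; linarith
  have h2 : (2:ℝ) ≤ 2 ^ n := by
    calc (2:ℝ) = 2 ^ 1 := by norm_num
    _ ≤ 2 ^ n := pow_le_pow_right₀ (by norm_num) hn
  have hbe : b * 2 ^ n = 1 - q := div_mul_cancel₀ _ hpow.ne'
  have hs : a + b ≤ 1 := by
    have : 0 ≤ b * (2 ^ n - 2) := mul_nonneg hb (by linarith)
    have hab2 : a + b = q + 2 * b := by rw [hadef, hbdef]; ring
    nlinarith
  -- basic facts about f M := a^M - b^M
  have hf_nonneg : ∀ K : ℕ, 0 ≤ a ^ K - b ^ K := fun K =>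
    sub_nonneg.mpr (pow_le_pow_left₀ hb hab K)
  have hfq : a ^ M - b ^ M ≤ q := by
    obtain ⟨k, rfl⟩ : ∃ k, M = k + 1 := ⟨M - 1, by omega⟩
    have := vd_aux a b hb hab hs k
    have : a - b = q := by rw [hadef, hbdef]; ring
    linarith [vd_aux a b hb hab hs k]
  refine ⟨?_, ?_, ?_⟩
  · -- Γ ≤ 1
    have hsq : (a ^ M - b ^ M) ^ 2 ≤ q ^ 2 := by
      have := hf_nonneg M
      nlinarith
    have hq2 : (0:ℝ) < q ^ 2 := by positivity
    rw [vdGamma]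
    rw [div_mul_eq_mul_div, one_mul, div_le_one hq2]
    exact hsq
  · -- monotone in M
    obtain ⟨k, rfl⟩ : ∃ k, M = k + 1 := ⟨M - 1, by omega⟩
    have hstep := vd_step a b hb hab hs k
    have h1 := hf_nonneg (k + 2)
    have hq2 : (0:ℝ) < 1 / q ^ 2 := by positivity
    rw [vdGamma, vdGamma]
    apply mul_le_mul_of_nonneg_left _ hq2.le
    have : (a ^ (k + 1 + 1) - b ^ (k + 1 + 1)) ≤ (a ^ (k + 1) - b ^ (k + 1)) := hstep
    nlinarith [hf_nonneg (k + 1)]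
  · -- Γ(1,2,q) = 1
    rw [vdGamma]
    have : ((q + (1 - q) / 2 ^ 1) ^ 2 - ((1 - q) / 2 ^ 1) ^ 2) = q := by ring
    rw [this]
    field_simp
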